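/- Let (X_n)_{n in Z} be a stationary ergodic process with values in R^d_+ with E|log X_0^{(j)}| < infinity for all j, and let S_n* denote the wealth of the log-optimal (conditionally optimal) portfolio strategy after n periods starting from S_0* = 1. Then for any other causal portfolio strategy B with wealth S_n, limsup_{n -> infinity} (1/n) log (S_n / S_n*) <= 0 almost surely. -/

import Mathlib

/-!
Write `R i = ⟨b_i, X_{i+1}⟩ / ⟨b*_i, X_{i+1}⟩`, so that `S n / S* n = ∏_{i<n} R i`. Conditional
log-optimality of `b*` against the mixtures `(1 - u) b* + u b` and the limit `u ↓ 0` give the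
Kuhn–Tucker inequality `E[R n | F n] ≤ 1`. Hence `E[∏_{i<n} R i] ≤ 1` (truncating the factors
keeps the partial products bounded, so they can be pulled out of the conditional expectation),
Markov's inequality gives `P(S n / S* n ≥ exp (ε n)) ≤ exp (-ε n)`, and Borel–Cantelli concludes.
-/

open MeasureTheory Filter Topology Real

section

variable {ι : Type*} [Fintype ι] {v x : ι → ℝ}

theorem exists_le_sum_mul_of_mem_stdSimplex (hv : v ∈ stdSimplex ℝ ι) :
    ∃ j, x j ≤ ∑ i, v i * x i := by
  have : Nonempty ι := by
    by_contra h
    simpa [not_nonempty_iff.mp h] using hv.2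
  obtain ⟨j, -, hj⟩ := Finset.exists_min_image Finset.univ x Finset.univ_nonempty
  refine ⟨j, ?_⟩
  calc x j = ∑ i, v i * x j := by rw [← Finset.sum_mul, hv.2, one_mul]
    _ ≤ ∑ i, v i * x i := Finset.sum_le_sum fun i hi => mul_le_mul_of_nonneg_left (hj i hi) (hv.1 i)

theorem exists_sum_mul_le_of_mem_stdSimplex (hv : v ∈ stdSimplex ℝ ι) :
    ∃ j, ∑ i, v i * x i ≤ x j := by
  obtain ⟨j, hj⟩ := exists_le_sum_mul_of_mem_stdSimplex (x := -x) hv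
  exact ⟨j, by simpa [Finset.sum_neg_distrib] using hj⟩

theorem sum_mul_pos_of_mem_stdSimplex (hv : v ∈ stdSimplex ℝ ι) (hx : ∀ j, 0 < x j) :
    0 < ∑ i, v i * x i :=
  let ⟨j, hj⟩ := exists_le_sum_mul_of_mem_stdSimplex hv
  (hx j).trans_le hj

theorem abs_log_sum_mul_le_of_mem_stdSimplex (hv : v ∈ stdSimplex ℝ ι) (hx : ∀ j, 0 < x j) :
    |log (∑ i, v i * x i)| ≤ ∑ i, |log (x i)| := by
  obtain ⟨j, hj⟩ := exists_le_sum_mul_of_mem_stdSimplex hv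
  obtain ⟨k, hk⟩ := exists_sum_mul_le_of_mem_stdSimplex hv
  have hle : ∀ l, |log (x l)| ≤ ∑ i, |log (x i)| := fun l =>
    Finset.single_le_sum (f := fun i => |log (x i)|) (fun i _ => abs_nonneg _) (Finset.mem_univ l)
  rw [abs_le]
  constructor
  · linarith [log_le_log (hx j) hj, neg_abs_le (log (x j)), hle j]
  · linarith [log_le_log (sum_mul_pos_of_mem_stdSimplex hv hx) hk, le_abs_self (log (x k)), hle k]

end

theorem log_sub_log_le_slope_log_mix {a c u : ℝ} (ha : 0 < a) (hc : 0 < c) (hu0 : 0 < u)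
    (hu1 : u ≤ 1) : log c - log a ≤ (log ((1 - u) * a + u * c) - log a) / u := by
  have hconc := strictConcaveOn_log_Ioi.concaveOn.2 (Set.mem_Ioi.mpr ha) (Set.mem_Ioi.mpr hc)
    (by linarith : 0 ≤ 1 - u) hu0.le (by ring)
  simp only [smul_eq_mul] at hconc
  rw [le_div_iff₀ hu0]
  linarith

theorem abs_log_mix_le {a c u : ℝ} (ha : 0 < a) (hc : 0 < c) (hu0 : 0 ≤ u) (hu1 : u ≤ 1) :
    |log ((1 - u) * a + u * c)| ≤ |log a| + |log c| := by
  simpa using abs_log_sum_mul_le_of_mem_stdSimplex (v := ![1 - u, u]) (x := ![a, c])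
    ⟨Fin.forall_fin_two.2 ⟨sub_nonneg.2 hu1, hu0⟩, by simp⟩ (Fin.forall_fin_two.2 ⟨ha, hc⟩)

theorem tendsto_slope_log_mix {a : ℝ} (ha : 0 < a) (c : ℝ) {u : ℕ → ℝ} (hu0 : ∀ k, u k ≠ 0)
    (hu : Tendsto u atTop (𝓝 0)) :
    Tendsto (fun k => (log ((1 - u k) * a + u k * c) - log a) / u k) atTop (𝓝 (c / a - 1)) := by
  have hd : HasDerivAt (fun l => log (a + l * (c - a))) (c / a - 1) 0 := by
    have h := (((hasDerivAt_id (0 : ℝ)).mul_const (c - a)).const_add a).log (by simpa using ha.ne')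
    convert h using 1
    · simp
    · simp [sub_div, ha.ne']
  rw [hasDerivAt_iff_tendsto_slope] at hd
  refine (hd.comp (tendsto_nhdsWithin_of_tendsto_nhds_of_eventually_within _ hu
    (Eventually.of_forall hu0))).congr fun k => ?_
  simp only [Function.comp_apply, slope_def_field, zero_mul, add_zero, sub_zero]
  ring_nf

theorem limsup_log_div_le_zero {w : ℕ → ℝ} (hw0 : ∀ n, 0 ≤ w n)
    (hw : ∀ ε > 0, ∀ᶠ n in atTop, w n < exp (ε * n)) :
    limsup (fun n : ℕ => ((1 / n * log (w n) : ℝ) : EReal)) atTop ≤ 0 := by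
  refine EReal.le_of_forall_lt_iff_le.mp fun ε hε => limsup_le_of_le (by isBoundedDefault) ?_
  filter_upwards [hw ε (EReal.coe_pos.mp hε), eventually_gt_atTop 0] with n hn hn0
  rw [EReal.coe_le_coe_iff, one_div, inv_mul_le_iff₀ (by exact_mod_cast hn0)]
  rcases (hw0 n).eq_or_lt with h | h
  · rw [← h, log_zero]; exact mul_nonneg n.cast_nonneg (EReal.coe_pos.mp hε).le
  · rw [mul_comm]; exact (log_lt_iff_lt_exp h).2 hn |>.le

section

variable {Ω : Type*} {m m0 : MeasurableSpace Ω} {P : Measure Ω}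

theorem integral_mul_le_integral_mul_of_condExp_le (hm : m ≤ m0) [IsFiniteMeasure P]
    {Z f g : Ω → ℝ} {C : ℝ} (hZ : StronglyMeasurable[m] Z) (hZ0 : ∀ ω, 0 ≤ Z ω)
    (hZC : ∀ ω, Z ω ≤ C) (hf : Integrable f P) (hg : Integrable g P) (hfg : P[f|m] ≤ᵐ[P] P[g|m]) :
    ∫ ω, Z ω * f ω ∂P ≤ ∫ ω, Z ω * g ω ∂P := by
  have hZb : ∀ᵐ ω ∂P, ‖Z ω‖ ≤ C :=
    ae_of_all _ fun ω => (Real.norm_of_nonneg (hZ0 ω)).trans_le (hZC ω)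
  have hZm0 : AEStronglyMeasurable Z P := (hZ.mono hm).aestronglyMeasurable
  have pull_out : ∀ h : Ω → ℝ, Integrable h P → ∫ ω, Z ω * h ω ∂P = ∫ ω, Z ω * P[h|m] ω ∂P :=
    fun h hh => by
      rw [← integral_condExp hm]
      exact integral_congr_ae (condExp_mul_of_stronglyMeasurable_left hZ (hh.bdd_mul hZm0 hZb) hh)
  rw [pull_out f hf, pull_out g hg]
  refine integral_mono_ae (integrable_condExp.bdd_mul hZm0 hZb)
    (integrable_condExp.bdd_mul hZm0 hZb) ?_
  filter_upwards [hfg] with ω h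
  exact mul_le_mul_of_nonneg_left h (hZ0 ω)

theorem integral_min_nonpos_of_tendsto {f : ℕ → Ω → ℝ} {g L h : Ω → ℝ}
    (hf : ∀ k, Integrable (f k) P) (hf_nonpos : ∀ k, ∫ ω, f k ω ∂P ≤ 0) (hL : Integrable L P)
    (hLf : ∀ k ω, L ω ≤ f k ω) (hh : Integrable h P)
    (hlim : ∀ ω, Tendsto (fun k => f k ω) atTop (𝓝 (g ω))) :
    ∫ ω, min (g ω) (h ω) ∂P ≤ 0 := by
  have hdom : ∀ k ω, ‖min (f k ω) (h ω)‖ ≤ |L ω| + |h ω| := fun k ω => by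
    rw [Real.norm_eq_abs, abs_le]
    constructor
    · exact le_min (by linarith [neg_abs_le (L ω), abs_nonneg (h ω), hLf k ω])
        (by linarith [neg_abs_le (h ω), abs_nonneg (L ω)])
    · exact (min_le_right _ _).trans (by linarith [le_abs_self (h ω), abs_nonneg (L ω)])
  have hconv := tendsto_integral_of_dominated_convergence (fun ω => |L ω| + |h ω|)
    (fun k => ((hf k).inf hh).aestronglyMeasurable) (hL.abs.add hh.abs)
    (fun k => ae_of_all _ (hdom k)) (ae_of_all _ fun ω => (hlim ω).min tendsto_const_nhds)
  refine le_of_tendsto' hconv fun k => (integral_mono ((hf k).inf hh) (hf k) ?_).trans (hf_nonpos k)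
  exact fun ω => min_le_left _ _

variable {A B : Ω → ℝ}

theorem integrable_log_mix (hA : Measurable A) (hB : Measurable B) (hA0 : ∀ ω, 0 < A ω)
    (hB0 : ∀ ω, 0 < B ω) (hlogA : Integrable (fun ω => log (A ω)) P)
    (hlogB : Integrable (fun ω => log (B ω)) P) {u : ℝ} (hu0 : 0 ≤ u) (hu1 : u ≤ 1) :
    Integrable (fun ω => log ((1 - u) * A ω + u * B ω)) P :=
  Integrable.mono' (hlogA.abs.add hlogB.abs) (by fun_prop : Measurable _).log.aestronglyMeasurable
    (ae_of_all _ fun ω => abs_log_mix_le (hA0 ω) (hB0 ω) hu0 hu1)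

theorem integral_mul_slope_log_mix_nonpos (hm : m ≤ m0) [IsFiniteMeasure P]
    (hA : Measurable A) (hB : Measurable B) (hA0 : ∀ ω, 0 < A ω)
    (hB0 : ∀ ω, 0 < B ω) (hlogA : Integrable (fun ω => log (A ω)) P)
    (hlogB : Integrable (fun ω => log (B ω)) P) {Z : Ω → ℝ} {C u : ℝ}
    (hZ : StronglyMeasurable[m] Z) (hZ0 : ∀ ω, 0 ≤ Z ω) (hZC : ∀ ω, Z ω ≤ C)
    (hu0 : 0 < u) (hu1 : u ≤ 1)
    (hopt : P[fun ω => log ((1 - u) * A ω + u * B ω)|m] ≤ᵐ[P] P[fun ω => log (A ω)|m]) :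
    ∫ ω, Z ω * ((log ((1 - u) * A ω + u * B ω) - log (A ω)) / u) ∂P ≤ 0 := by
  have hmix := integrable_log_mix hA hB hA0 hB0 hlogA hlogB hu0.le hu1
  have hZb : ∀ᵐ ω ∂P, ‖Z ω‖ ≤ C :=
    ae_of_all _ fun ω => (Real.norm_of_nonneg (hZ0 ω)).trans_le (hZC ω)
  have hZm0 : AEStronglyMeasurable Z P := (hZ.mono hm).aestronglyMeasurable
  calc ∫ ω, Z ω * ((log ((1 - u) * A ω + u * B ω) - log (A ω)) / u) ∂P
      = u⁻¹ * (∫ ω, Z ω * log ((1 - u) * A ω + u * B ω) ∂P - ∫ ω, Z ω * log (A ω) ∂P) := by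
        rw [← integral_sub (hmix.bdd_mul hZm0 hZb) (hlogA.bdd_mul hZm0 hZb), ← integral_const_mul]
        congr 1 with ω
        field_simp
    _ ≤ 0 := mul_nonpos_of_nonneg_of_nonpos (inv_nonneg.2 hu0.le) (sub_nonpos.2
        (integral_mul_le_integral_mul_of_condExp_le hm hZ hZ0 hZC hmix hlogA hopt))

theorem integral_mul_min_div_le (hm : m ≤ m0) [IsFiniteMeasure P]
    (hA : Measurable A) (hB : Measurable B) (hA0 : ∀ ω, 0 < A ω)
    (hB0 : ∀ ω, 0 < B ω) (hlogA : Integrable (fun ω => log (A ω)) P)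
    (hlogB : Integrable (fun ω => log (B ω)) P)
    (hopt : ∀ u ∈ Set.Ioc (0 : ℝ) 1,
      P[fun ω => log ((1 - u) * A ω + u * B ω)|m] ≤ᵐ[P] P[fun ω => log (A ω)|m])
    {Z : Ω → ℝ} {C : ℝ} (hZ : StronglyMeasurable[m] Z) (hZ0 : ∀ ω, 0 ≤ Z ω)
    (hZC : ∀ ω, Z ω ≤ C) (M : ℝ) :
    ∫ ω, Z ω * min (B ω / A ω) M ∂P ≤ ∫ ω, Z ω ∂P := by
  set u : ℕ → ℝ := fun k => 1 / (k + 1)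
  have hu0 : ∀ k, 0 < u k := fun k => by positivity
  have hu1 : ∀ k, u k ≤ 1 := fun k => div_le_one_of_le₀ (by simp) (by positivity)
  have hZb : ∀ᵐ ω ∂P, ‖Z ω‖ ≤ C :=
    ae_of_all _ fun ω => (Real.norm_of_nonneg (hZ0 ω)).trans_le (hZC ω)
  have hZm0 : AEStronglyMeasurable Z P := (hZ.mono hm).aestronglyMeasurable
  have hZint : Integrable Z P := .of_bound hZm0 C hZb
  have hslope_int : ∀ k, Integrable
      (fun ω => Z ω * ((log ((1 - u k) * A ω + u k * B ω) - log (A ω)) / u k)) P := fun k =>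
    (((integrable_log_mix hA hB hA0 hB0 hlogA hlogB (hu0 k).le (hu1 k)).sub hlogA).div_const
      _).bdd_mul hZm0 hZb
  have hlim := integral_min_nonpos_of_tendsto hslope_int
    (fun k => integral_mul_slope_log_mix_nonpos hm hA hB hA0 hB0 hlogA hlogB hZ hZ0 hZC (hu0 k)
      (hu1 k) (hopt _ ⟨hu0 k, hu1 k⟩))
    ((hlogB.sub hlogA).bdd_mul hZm0 hZb)
    (fun k ω => mul_le_mul_of_nonneg_left
      (log_sub_log_le_slope_log_mix (hA0 ω) (hB0 ω) (hu0 k) (hu1 k)) (hZ0 ω))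
    (hZint.mul_const (M - 1))
    (fun ω => (tendsto_slope_log_mix (hA0 ω) (B ω) (fun k => (hu0 k).ne')
      tendsto_one_div_add_atTop_nhds_zero_nat).const_mul (Z ω))
  have hmin_int : Integrable (fun ω => Z ω * min (B ω / A ω) M) P := by
    refine hZint.mul_bdd (by fun_prop : Measurable _).aestronglyMeasurable
      (c := |M|) (ae_of_all _ fun ω => ?_)
    have hR0 : 0 ≤ B ω / A ω := (div_pos (hB0 ω) (hA0 ω)).le
    rw [Real.norm_eq_abs, abs_le]
    constructor
    · exact le_min (by linarith [abs_nonneg M]) (neg_abs_le M)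
    · exact (min_le_right _ _).trans (le_abs_self M)
  have : ∫ ω, min (Z ω * (B ω / A ω - 1)) (Z ω * (M - 1)) ∂P
      = ∫ ω, Z ω * min (B ω / A ω) M ∂P - ∫ ω, Z ω ∂P := by
    rw [← integral_sub hmin_int hZint]
    congr 1 with ω
    rw [← mul_min_of_nonneg _ _ (hZ0 ω), min_sub_sub_right]
    ring
  linarith

theorem condExp_log_mix_le {ι E : Type*} [Fintype ι] [MeasurableSpace E] {H : Ω → E}
    {x : Ω → ι → ℝ} {p q : E → ι → ℝ} (hp : Measurable p) (hq : Measurable q)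
    (hps : ∀ h, p h ∈ stdSimplex ℝ ι) (hqs : ∀ h, q h ∈ stdSimplex ℝ ι)
    (hopt : ∀ c : E → ι → ℝ, Measurable c → (∀ h, c h ∈ stdSimplex ℝ ι) →
      P[fun ω => log (∑ j, c (H ω) j * x ω j)|m] ≤ᵐ[P] P[fun ω => log (∑ j, p (H ω) j * x ω j)|m])
    {u : ℝ} (hu0 : 0 ≤ u) (hu1 : u ≤ 1) :
    P[fun ω => log ((1 - u) * ∑ j, p (H ω) j * x ω j + u * ∑ j, q (H ω) j * x ω j)|m]
      ≤ᵐ[P] P[fun ω => log (∑ j, p (H ω) j * x ω j)|m] := by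
  convert hopt (fun h => (1 - u) • p h + u • q h) (by fun_prop)
    (fun h => convex_stdSimplex ℝ ι (hps h) (hqs h) (by linarith) hu0 (by ring)) using 4 with ω
  simp only [Pi.add_apply, Pi.smul_apply, smul_eq_mul, add_mul, Finset.sum_add_distrib,
    Finset.mul_sum, mul_assoc]

theorem integrable_log_sum_mul_of_mem_stdSimplex {ι : Type*} [Fintype ι] {v x : Ω → ι → ℝ}
    (hv : Measurable v) (hx : Measurable x) (hvs : ∀ ω, v ω ∈ stdSimplex ℝ ι)
    (hx0 : ∀ ω j, 0 < x ω j) (hlog : ∀ j, Integrable (fun ω => |log (x ω j)|) P) :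
    Integrable (fun ω => log (∑ j, v ω j * x ω j)) P :=
  Integrable.mono' (integrable_finsetSum _ fun j _ => hlog j)
    (by fun_prop : Measurable _).log.aestronglyMeasurable
    (ae_of_all _ fun ω => abs_log_sum_mul_le_of_mem_stdSimplex (hvs ω) (hx0 ω))

theorem integral_mul_min_sum_mul_div_le (hm : m ≤ m0) [IsFiniteMeasure P] {ι E : Type*}
    [Fintype ι] [MeasurableSpace E] {H : Ω → E} {x : Ω → ι → ℝ} (hH : Measurable H)
    (hx : Measurable x) (hx0 : ∀ ω j, 0 < x ω j)
    (hlogx : ∀ j, Integrable (fun ω => |log (x ω j)|) P) {p q : E → ι → ℝ}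
    (hp : Measurable p) (hq : Measurable q)
    (hps : ∀ h, p h ∈ stdSimplex ℝ ι) (hqs : ∀ h, q h ∈ stdSimplex ℝ ι)
    (hopt : ∀ c : E → ι → ℝ, Measurable c → (∀ h, c h ∈ stdSimplex ℝ ι) →
      P[fun ω => log (∑ j, c (H ω) j * x ω j)|m] ≤ᵐ[P] P[fun ω => log (∑ j, p (H ω) j * x ω j)|m])
    {Z : Ω → ℝ} {C : ℝ} (hZ : StronglyMeasurable[m] Z) (hZ0 : ∀ ω, 0 ≤ Z ω)
    (hZC : ∀ ω, Z ω ≤ C) (M : ℝ) :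
    ∫ ω, Z ω * min ((∑ j, q (H ω) j * x ω j) / ∑ j, p (H ω) j * x ω j) M ∂P ≤ ∫ ω, Z ω ∂P :=
  integral_mul_min_div_le hm (by fun_prop) (by fun_prop)
    (fun ω => sum_mul_pos_of_mem_stdSimplex (hps _) (hx0 ω))
    (fun ω => sum_mul_pos_of_mem_stdSimplex (hqs _) (hx0 ω))
    (integrable_log_sum_mul_of_mem_stdSimplex (hp.comp hH) hx (fun ω => hps _) hx0 hlogx)
    (integrable_log_sum_mul_of_mem_stdSimplex (hq.comp hH) hx (fun ω => hqs _) hx0 hlogx)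
    (fun u hu => condExp_log_mix_le hp hq hps hqs hopt hu.1.le hu.2) hZ hZ0 hZC M

theorem integral_prod_le_one [IsProbabilityMeasure P] {F : ℕ → MeasurableSpace Ω}
    {Y : ℕ → Ω → ℝ} {M : ℝ} (hY0 : ∀ i ω, 0 ≤ Y i ω) (hYM : ∀ i ω, Y i ω ≤ M)
    (hYF : ∀ n i, i < n → Measurable[F n] (Y i))
    (hY : ∀ n (Z : Ω → ℝ) (C : ℝ), Measurable[F n] Z → (∀ ω, 0 ≤ Z ω) → (∀ ω, Z ω ≤ C) →
      ∫ ω, Z ω * Y n ω ∂P ≤ ∫ ω, Z ω ∂P) (n : ℕ) :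
    ∫ ω, ∏ i ∈ Finset.range n, Y i ω ∂P ≤ 1 := by
  induction n with
  | zero => simp
  | succ n ih =>
    simp only [Finset.prod_range_succ]
    refine (hY n _ (M ^ n) ?_ (fun ω => Finset.prod_nonneg fun i _ => hY0 i ω) ?_).trans ih
    · exact Finset.measurable_prod _ fun i hi => hYF n i (Finset.mem_range.mp hi)
    · exact fun ω => (Finset.prod_le_prod (fun i _ => hY0 i ω) fun i _ => hYM i ω).trans_eq
        (by simp)

theorem lintegral_ofReal_prod_le_one [IsFiniteMeasure P] {R : ℕ → Ω → ℝ}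
    (hR0 : ∀ i ω, 0 ≤ R i ω) (hR : ∀ i, Measurable (R i)) {n : ℕ}
    (h : ∀ M : ℕ, ∫ ω, ∏ i ∈ Finset.range n, min (R i ω) M ∂P ≤ 1) :
    ∫⁻ ω, ENNReal.ofReal (∏ i ∈ Finset.range n, R i ω) ∂P ≤ 1 := by
  have htrunc : ∀ ω, ∀ᶠ M : ℕ in atTop,
      ∏ i ∈ Finset.range n, min (R i ω) M = ∏ i ∈ Finset.range n, R i ω := fun ω => by
    filter_upwards [(eventually_all_finset _).2 fun i _ =>
      tendsto_natCast_atTop_atTop.eventually_ge_atTop (R i ω)] with M hM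
    exact Finset.prod_congr rfl fun i hi => min_eq_left (hM i hi)
  have hmeas : ∀ M : ℕ, Measurable fun ω => ∏ i ∈ Finset.range n, min (R i ω) M := fun M =>
    Finset.measurable_prod _ fun i _ => (hR i).min measurable_const
  have hmin0 : ∀ (M : ℕ) ω i, 0 ≤ min (R i ω) M := fun M ω i => le_min (hR0 i ω) M.cast_nonneg
  calc ∫⁻ ω, ENNReal.ofReal (∏ i ∈ Finset.range n, R i ω) ∂P
      = ∫⁻ ω, liminf (fun M : ℕ =>
          ENNReal.ofReal (∏ i ∈ Finset.range n, min (R i ω) M)) atTop ∂P :=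
        lintegral_congr fun ω => (tendsto_const_nhds.congr' ((htrunc ω).mono fun M hM =>
          congrArg ENNReal.ofReal hM.symm)).liminf_eq.symm
    _ ≤ liminf (fun M : ℕ =>
          ∫⁻ ω, ENNReal.ofReal (∏ i ∈ Finset.range n, min (R i ω) M) ∂P) atTop :=
        lintegral_liminf_le fun M => (hmeas M).ennreal_ofReal
    _ ≤ 1 := by
        refine liminf_le_of_frequently_le' (Frequently.of_forall fun M => ?_)
        have hbdd : ∀ ω, ‖∏ i ∈ Finset.range n, min (R i ω) M‖ ≤ (M : ℝ) ^ n := fun ω => by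
          rw [Real.norm_eq_abs, abs_of_nonneg (Finset.prod_nonneg fun i _ => hmin0 M ω i)]
          exact (Finset.prod_le_prod (fun i _ => hmin0 M ω i) fun i _ => min_le_right _ _).trans_eq
            (by simp)
        rw [← ofReal_integral_eq_lintegral_ofReal
          (.of_bound (hmeas M).aestronglyMeasurable _ (ae_of_all _ hbdd))
          (ae_of_all _ fun ω => Finset.prod_nonneg fun i _ => hmin0 M ω i)]
        exact ENNReal.ofReal_le_one.2 (h M)

theorem ae_eventually_lt_exp_mul {W : ℕ → Ω → ℝ} (hW : ∀ n, AEMeasurable (W n) P)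
    (hW1 : ∀ n, ∫⁻ ω, ENNReal.ofReal (W n ω) ∂P ≤ 1) :
    ∀ᵐ ω ∂P, ∀ ε > 0, ∀ᶠ n in atTop, W n ω < exp (ε * n) := by
  have hmarkov : ∀ (ε : ℝ) (n : ℕ),
      P {ω | exp (ε * n) ≤ W n ω} ≤ ENNReal.ofReal (exp (-ε)) ^ n := by
    intro ε n
    calc P {ω | exp (ε * n) ≤ W n ω}
        ≤ P {ω | ENNReal.ofReal (exp (ε * n)) ≤ ENNReal.ofReal (W n ω)} :=
          measure_mono fun ω hω => ENNReal.ofReal_le_ofReal hω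
      _ ≤ (∫⁻ ω, ENNReal.ofReal (W n ω) ∂P) / ENNReal.ofReal (exp (ε * n)) :=
          meas_ge_le_lintegral_div (hW n).ennreal_ofReal (by simp [exp_pos]) ENNReal.ofReal_ne_top
      _ ≤ 1 / ENNReal.ofReal (exp (ε * n)) := by gcongr; exact hW1 n
      _ = ENNReal.ofReal (exp (-ε)) ^ n := by
          rw [← ENNReal.ofReal_pow (exp_pos _).le, ← exp_nat_mul, one_div,
            ← ENNReal.ofReal_inv_of_pos (exp_pos _), ← exp_neg]
          ring_nf
  have hbc : ∀ k : ℕ, ∀ᵐ ω ∂P, ∀ᶠ n in atTop, W n ω < exp (1 / (k + 1) * n) := fun k => by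
    have hr : ENNReal.ofReal (exp (-(1 / (k + 1)))) < 1 :=
      ENNReal.ofReal_lt_one.2 (exp_lt_one_iff.2 (by simp only [neg_lt_zero]; positivity))
    have hsum : ∑' n : ℕ, P {ω | exp (1 / (k + 1) * n) ≤ W n ω} ≠ ⊤ :=
      ne_top_of_le_ne_top (by simpa [ENNReal.tsum_geometric] using (tsub_pos_of_lt hr).ne')
        (ENNReal.tsum_le_tsum fun n => hmarkov _ n)
    filter_upwards [ae_eventually_notMem hsum] with ω hω
    exact hω.mono fun n hn => not_le.mp hn
  filter_upwards [ae_all_iff.2 hbc] with ω hω ε hε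
  obtain ⟨k, hk⟩ := exists_nat_one_div_lt hε
  filter_upwards [hω k] with n hn
  exact hn.trans_le (exp_le_exp.2 (mul_le_mul_of_nonneg_right hk.le n.cast_nonneg))

theorem ae_limsup_log_prod_le_zero [IsProbabilityMeasure P] {F : ℕ → MeasurableSpace Ω}
    (hF : ∀ n, F n ≤ m0) {R : ℕ → Ω → ℝ} (hR0 : ∀ i ω, 0 ≤ R i ω)
    (hRF : ∀ n i, i < n → Measurable[F n] (R i))
    (hstep : ∀ n (Z : Ω → ℝ) (C : ℝ), Measurable[F n] Z → (∀ ω, 0 ≤ Z ω) →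
      (∀ ω, Z ω ≤ C) → ∀ M, ∫ ω, Z ω * min (R n ω) M ∂P ≤ ∫ ω, Z ω ∂P) :
    ∀ᵐ ω ∂P, limsup (fun n : ℕ =>
      ((1 / n * log (∏ i ∈ Finset.range n, R i ω) : ℝ) : EReal)) atTop ≤ 0 := by
  have hR : ∀ i, Measurable (R i) := fun i => (hRF (i + 1) i i.lt_succ_self).mono (hF _) le_rfl
  have hprod : ∀ n, ∫⁻ ω, ENNReal.ofReal (∏ i ∈ Finset.range n, R i ω) ∂P ≤ 1 := fun n =>
    lintegral_ofReal_prod_le_one hR0 hR fun M =>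
      integral_prod_le_one (fun i ω => le_min (hR0 i ω) M.cast_nonneg) (fun i ω => min_le_right _ _)
        (fun n i hi => (hRF n i hi).min measurable_const)
        (fun n Z C hZ hZ0 hZC => hstep n Z C hZ hZ0 hZC M) n
  filter_upwards [ae_eventually_lt_exp_mul (fun n => (Finset.measurable_prod _
    fun i _ => hR i).aemeasurable) hprod] with ω hω
  exact limsup_log_div_le_zero (fun n => Finset.prod_nonneg fun i _ => hR0 i ω) hω

theorem iterate_shift_eq {E : Type*} {X : ℤ → Ω → E} {T : Ω → Ω}
    (hshift : ∀ i ω, X i (T ω) = X (i - 1) ω) (n : ℕ) (ω : Ω) : X n (T^[n] ω) = X 0 ω := by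
  induction n generalizing ω with
  | zero => simp
  | succ n ih => rw [Function.iterate_succ_apply', hshift, Nat.cast_succ, add_sub_cancel_right, ih]

theorem integrable_comp_of_shift {E : Type*} {X : ℤ → Ω → E} {T : Ω → Ω}
    (hT : MeasurePreserving T P P) (hshift : ∀ i ω, X i (T ω) = X (i - 1) ω) {g : E → ℝ}
    {n : ℕ} (hg : AEStronglyMeasurable (fun ω => g (X n ω)) P)
    (h0 : Integrable (fun ω => g (X 0 ω)) P) : Integrable (fun ω => g (X n ω)) P := by
  rw [← (hT.iterate n).integrable_comp hg]
  simpa only [Function.comp_def, iterate_shift_eq hshift] using h0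

section

variable {E : Type*} [MeasurableSpace E] {x : ℕ → Ω → E} {hist : (n : ℕ) → Ω → Fin n → E}

theorem measurable_hist (hx : ∀ k, Measurable (x k)) (hhist : ∀ n ω k, hist n ω k = x k ω)
    (n : ℕ) : Measurable (hist n) :=
  measurable_pi_lambda _ fun k => by simpa only [hhist] using hx k

theorem measurable_hist_of_le (hhist : ∀ n ω k, hist n ω k = x k ω) {i n : ℕ} (hin : i ≤ n) :
    Measurable[MeasurableSpace.comap (hist n) inferInstance] (hist i) := by
  have : hist i = (fun h k => h (Fin.castLE hin k)) ∘ hist n := by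
    funext ω k
    simp [hhist]
  rw [this]
  exact (measurable_pi_lambda _ fun k => measurable_pi_apply _).comp (comap_measurable _)

theorem measurable_coord_hist (hhist : ∀ n ω k, hist n ω k = x k ω) {i n : ℕ} (hin : i < n) :
    Measurable[MeasurableSpace.comap (hist n) inferInstance] (x i) := by
  have : x i = (fun h => h ⟨i, hin⟩) ∘ hist n := by
    funext ω
    simp [hhist]
  rw [this]
  exact (measurable_pi_apply _).comp (comap_measurable _)

end

theorem measurable_comap_hist_sum_mul {ι : Type*} [Fintype ι] {x : ℕ → Ω → ι → ℝ}
    {hist : (n : ℕ) → Ω → Fin n → ι → ℝ} (hhist : ∀ n ω k, hist n ω k = x k ω) {i n : ℕ}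
    (hin : i < n) {c : (Fin i → ι → ℝ) → ι → ℝ} (hc : Measurable c) :
    Measurable[MeasurableSpace.comap (hist n) inferInstance]
      fun ω => ∑ j, c (hist i ω) j * x i ω j := by
  have := measurable_hist_of_le hhist hin.le
  have := measurable_coord_hist hhist hin
  fun_prop

end

/-- Algoet–Cover optimality (first assertion of Lemma 6): for a stationary ergodic
`ℝ^d_+`-valued process with `E|log X_0^{(j)}| < ∞` (realized by an ergodic shift `T`
with `X_i ∘ T = X_{i-1}`), if `S_n^*` is the wealth of the conditionally log-optimal
strategy `b*` and `S_n` the wealth of any other causal portfolio strategy `b`, then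
`limsup_n (1/n) log (S_n / S_n^*) ≤ 0` almost surely. -/
theorem stmt16 {Ω : Type*} [m0 : MeasurableSpace Ω] (P : Measure Ω) [IsProbabilityMeasure P]
    (d : ℕ) (X : ℤ → Ω → (Fin d → ℝ))
    (hXmeas : ∀ i, Measurable (X i)) (hXpos : ∀ i ω j, 0 < X i ω j)
    (hint : ∀ j, Integrable (fun ω => |Real.log (X 0 ω j)|) P)
    (T : Ω → Ω) (hT : Ergodic T P) (hshift : ∀ i ω, X i (T ω) = X (i - 1) ω)
    -- past observations `X_1^{n}` and the filtration they generate
    (hist : (n : ℕ) → Ω → (Fin n → Fin d → ℝ))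
    (hhist : ∀ n ω k, hist n ω k = X ((k : ℤ) + 1) ω)
    (F : ℕ → MeasurableSpace Ω)
    (hF : ∀ n, F n = MeasurableSpace.comap (hist n) inferInstance)
    -- the log-optimal strategy `b*` and an arbitrary causal strategy `b`
    (bstar b : (n : ℕ) → (Fin n → Fin d → ℝ) → (Fin d → ℝ))
    (hbstarmeas : ∀ n, Measurable (bstar n)) (hbmeas : ∀ n, Measurable (b n))
    (hbstarsimplex : ∀ n h, bstar n h ∈ stdSimplex ℝ (Fin d))
    (hbsimplex : ∀ n h, b n h ∈ stdSimplex ℝ (Fin d))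
    (hopt : ∀ n, ∀ c : (Fin n → Fin d → ℝ) → (Fin d → ℝ), Measurable c →
      (∀ h, c h ∈ stdSimplex ℝ (Fin d)) →
      P[fun ω => Real.log (∑ j, c (hist n ω) j * X (n + 1) ω j) | F n]
        ≤ᵐ[P] P[fun ω => Real.log (∑ j, bstar n (hist n ω) j * X (n + 1) ω j) | F n])
    -- the corresponding wealths, starting from initial capital 1
    (Sstar S : ℕ → Ω → ℝ)
    (hSstar : ∀ n ω, Sstar n ω
      = ∏ i ∈ Finset.range n, ∑ j, bstar i (hist i ω) j * X (i + 1) ω j)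
    (hS : ∀ n ω, S n ω
      = ∏ i ∈ Finset.range n, ∑ j, b i (hist i ω) j * X (i + 1) ω j) :
    ∀ᵐ ω ∂P,
      limsup (fun n : ℕ =>
          (((1 : ℝ) / n * Real.log (S n ω / Sstar n ω) : ℝ) : EReal)) atTop ≤ 0 := by
  set x : ℕ → Ω → Fin d → ℝ := fun k => X (k + 1)
  have hhist_meas : ∀ n, Measurable (hist n) := measurable_hist (x := x) (fun k => hXmeas _) hhist
  have hFle : ∀ n, F n ≤ m0 := fun n => hF n ▸ (hhist_meas n).comap_le
  have hlogx : ∀ n j, Integrable (fun ω => |log (x n ω j)|) P := fun n j => by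
    exact_mod_cast integrable_comp_of_shift (n := n + 1) (g := fun y => |log (y j)|)
      hT.toMeasurePreserving hshift
      ((measurable_pi_apply j).comp (hXmeas _)).log.abs.aestronglyMeasurable (hint j)
  have hret_pos : ∀ c : (n : ℕ) → (Fin n → Fin d → ℝ) → Fin d → ℝ,
      (∀ n h, c n h ∈ stdSimplex ℝ (Fin d)) → ∀ n ω, 0 < ∑ j, c n (hist n ω) j * x n ω j :=
    fun c hc n ω => sum_mul_pos_of_mem_stdSimplex (hc n _) (hXpos _ ω)
  have hret_F : ∀ c : (n : ℕ) → (Fin n → Fin d → ℝ) → Fin d → ℝ, (∀ n, Measurable (c n)) →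
      ∀ i n, i < n → Measurable[F n] fun ω => ∑ j, c i (hist i ω) j * x i ω j :=
    fun c hc i n hin => hF n ▸ measurable_comap_hist_sum_mul (x := x) hhist hin (hc i)
  filter_upwards [ae_limsup_log_prod_le_zero hFle
    (fun i ω => (div_pos (hret_pos _ hbsimplex i ω) (hret_pos _ hbstarsimplex i ω)).le)
    (fun n i hi => (hret_F _ hbmeas i n hi).div (hret_F _ hbstarmeas i n hi))
    (fun n Z C hZ => integral_mul_min_sum_mul_div_le (hFle n) (hhist_meas n) (hXmeas _)
      (hXpos _) (hlogx n) (hbstarmeas n) (hbmeas n) (hbstarsimplex n) (hbsimplex n) (hopt n)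
      hZ.stronglyMeasurable)] with ω hω
  simpa only [hS, hSstar, ← Finset.prod_div_distrib] using hω
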